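/- Let G be a finite simple graph with vertex set V, let k be a positive integer, let T ⊆ V satisfy |Γ_T(Z)| ≥ k − 1 for every Steiner T-cut Z, and fix r ∈ T. Let M be the (nonempty) family of min-cores of the family of demand cuts (Steiner (T,r)-cuts X with |Γ_T(X)| = k − 1), let γ := min_{X ∈ M} |X ∩ T|, assume γ ≥ 1, and set k' := ⌊(k−1)/γ⌋. Then there exist subfamilies M₁, …, M_{2k'+1} ⊆ M with ⋃_{i=1}^{2k'+1} M_i = M such that for each i, every pair of distinct min-cores in M_i is independent. -/

import Mathlib

/-!
Since `X ↦ |Γ_T(X)|` is submodular and every Steiner cut has at least `k - 1` terminal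
neighbours, two demand cuts sharing a terminal have demand-cut intersection and union. Hence
distinct min-cores have disjoint terminal sets, and each core family is closed under union, so it
has a unique max-core `Z'`. As `|Γ_T(Z')| = k - 1` and every min-core has at least `γ` terminals,
`Γ(Z')` contains the terminals of at most `k' = ⌊(k - 1) / γ⌋` min-cores. So the digraph
"`Γ(Z')` contains `W ∩ T`" on min-cores has out-degree at most `k'`; every finite set of min-cores
then has a member of total degree at most `2k'`, and a greedy colouring with `2k' + 1` colours
gives the required independent classes.
-/

/-- `nbr G X` is Γ(X): the set of vertices outside `X` adjacent to a vertex of `X`. -/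
def nbr {V : Type*} [Fintype V] [DecidableEq V] (G : SimpleGraph V) [DecidableRel G.Adj]
    (X : Finset V) : Finset V :=
  Finset.univ.filter (fun v => v ∉ X ∧ ∃ u ∈ X, G.Adj u v)

/-- `cl G X` is X⁺ = X ∪ Γ(X). -/
def cl {V : Type*} [Fintype V] [DecidableEq V] (G : SimpleGraph V) [DecidableRel G.Adj]
    (X : Finset V) : Finset V :=
  X ∪ nbr G X

/-- A demand cut: a Steiner (T,r)-cut X with |Γ_T(X)| = k - 1. -/
def IsDemand {V : Type*} [Fintype V] [DecidableEq V] (G : SimpleGraph V) [DecidableRel G.Adj]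
    (T : Finset V) (k : ℕ) (r : V) (X : Finset V) : Prop :=
  (X ∩ T).Nonempty ∧ (T \ cl G X).Nonempty ∧ r ∉ cl G X ∧ (nbr G X ∩ T).card = k - 1

/-- A min-core: a minimal demand cut. -/
def IsMinCore {V : Type*} [Fintype V] [DecidableEq V] (G : SimpleGraph V) [DecidableRel G.Adj]
    (T : Finset V) (k : ℕ) (r : V) (X : Finset V) : Prop :=
  IsDemand G T k r X ∧ ∀ Y : Finset V, IsDemand G T k r Y → Y ⊆ X → Y = X

/-- A core: a demand cut containing exactly one min-core as a subset. -/
def IsCore {V : Type*} [Fintype V] [DecidableEq V] (G : SimpleGraph V) [DecidableRel G.Adj]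
    (T : Finset V) (k : ℕ) (r : V) (X : Finset V) : Prop :=
  IsDemand G T k r X ∧ ∃! Z : Finset V, IsMinCore G T k r Z ∧ Z ⊆ X

/-- The core family C(Z) of a min-core Z: the cores containing Z. -/
def coreFam {V : Type*} [Fintype V] [DecidableEq V] (G : SimpleGraph V) [DecidableRel G.Adj]
    (T : Finset V) (k : ℕ) (r : V) (Z : Finset V) : Set (Finset V) :=
  {X | IsCore G T k r X ∧ Z ⊆ X}

/-- `IsMaxCore G T k r Z X` : X is the maximal element of the core family C(Z). -/
def IsMaxCore {V : Type*} [Fintype V] [DecidableEq V] (G : SimpleGraph V)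
    [DecidableRel G.Adj] (T : Finset V) (k : ℕ) (r : V) (Z X : Finset V) : Prop :=
  X ∈ coreFam G T k r Z ∧ ∀ Y ∈ coreFam G T k r Z, X ⊆ Y → Y = X

/-- Two min-cores Z, W with max-cores Z', W' are independent if
W ∩ T ⊄ Γ(Z') and Z ∩ T ⊄ Γ(W'). -/
def IndepCores {V : Type*} [Fintype V] [DecidableEq V] (G : SimpleGraph V)
    [DecidableRel G.Adj] (T : Finset V) (k : ℕ) (r : V) (Z W : Finset V) : Prop :=
  ∀ Z' W' : Finset V, IsMaxCore G T k r Z Z' → IsMaxCore G T k r W W' →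
    ¬ (W ∩ T ⊆ nbr G Z') ∧ ¬ (Z ∩ T ⊆ nbr G W')

open Finset

section Coloring

variable {α : Type*} [DecidableEq α] (R : α → α → Prop) [DecidableRel R]

theorem exists_card_filter_or_le_two_mul {s : Finset α} {d : ℕ} (hs : s.Nonempty)
    (hR : ∀ a ∈ s, #(s.filter (R a)) ≤ d) :
    ∃ a ∈ s, #(s.filter fun b => R a b ∨ R b a) ≤ 2 * d := by
  apply exists_le_of_sum_le hs
  calc ∑ a ∈ s, #(s.filter fun b => R a b ∨ R b a)
      ≤ ∑ a ∈ s, (#(s.bipartiteAbove R a) + #(s.bipartiteBelow R a)) := by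
        gcongr with a
        rw [filter_or]
        exact card_union_le _ _
    _ = 2 * ∑ a ∈ s, #(s.filter (R a)) := by
        rw [sum_add_distrib, ← sum_card_bipartiteAbove_eq_sum_card_bipartiteBelow]
        simp only [bipartiteAbove, two_mul]
    _ ≤ ∑ _a ∈ s, 2 * d := by
        rw [← mul_sum]
        gcongr with a ha
        exact hR a ha

theorem exists_coloring_of_card_filter_le (d : ℕ) (s : Finset α)
    (hR : ∀ a ∈ s, #(s.filter (R a)) ≤ d) :
    ∃ c : α → Fin (2 * d + 1), ∀ a ∈ s, ∀ b ∈ s, a ≠ b → R a b ∨ R b a → c a ≠ c b := by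
  induction s using Finset.strongInduction with
  | H s ih =>
    rcases s.eq_empty_or_nonempty with rfl | hs
    · exact ⟨0, by simp⟩
    obtain ⟨a, ha, hdeg⟩ := exists_card_filter_or_le_two_mul R hs hR
    obtain ⟨c, hc⟩ := ih (s.erase a) (erase_ssubset ha) fun x hx =>
      (card_le_card (filter_subset_filter _ (erase_subset a s))).trans (hR x (mem_of_mem_erase hx))
    obtain ⟨i, -, hi⟩ : ∃ i ∈ univ, i ∉ (s.filter fun b => R a b ∨ R b a).image c :=
      exists_mem_notMem_of_card_lt_card <| card_image_le.trans_lt <| by simpa [Nat.lt_succ_iff]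
    have hfree : ∀ b ∈ s, b ≠ a → R a b ∨ R b a →
        Function.update c a i a ≠ Function.update c a i b := fun b hb hba hab => by
      rw [Function.update_self, Function.update_of_ne hba]
      exact fun h => hi (mem_image.2 ⟨b, mem_filter.2 ⟨hb, hab⟩, h.symm⟩)
    refine ⟨Function.update c a i, fun x hx y hy hxy hRxy => ?_⟩
    by_cases hxa : x = a
    · subst hxa
      exact hfree y hy (Ne.symm hxy) hRxy
    by_cases hya : y = a
    · subst hya
      exact (hfree x hx hxa hRxy.symm).symm
    rw [Function.update_of_ne hxa, Function.update_of_ne hya]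
    exact hc x (mem_erase.2 ⟨hxa, hx⟩) y (mem_erase.2 ⟨hya, hy⟩) hxy hRxy

end Coloring

theorem Finset.card_mul_le_card_of_pairwiseDisjoint {ι α : Type*} [DecidableEq α] {D : Finset ι}
    {f : ι → Finset α} {S : Finset α} {γ : ℕ} (hdisj : (D : Set ι).PairwiseDisjoint f)
    (hsub : ∀ i ∈ D, f i ⊆ S) (hγ : ∀ i ∈ D, γ ≤ #(f i)) : #D * γ ≤ #S :=
  calc #D * γ ≤ ∑ i ∈ D, #(f i) := by simpa using card_nsmul_le_sum D (fun i => #(f i)) γ hγ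
    _ = #(D.biUnion f) := (card_biUnion hdisj).symm
    _ ≤ #S := card_le_card (biUnion_subset.2 hsub)

section Cuts

variable {V : Type*} [Fintype V] [DecidableEq V] {G : SimpleGraph V} [DecidableRel G.Adj]
  {X Y Z W : Finset V} {v : V}

@[simp]
theorem mem_nbr : v ∈ nbr G X ↔ v ∉ X ∧ ∃ u ∈ X, G.Adj u v := by
  simp [nbr]

theorem mem_cl : v ∈ cl G X ↔ v ∈ X ∨ ∃ u ∈ X, G.Adj u v := by
  by_cases h : v ∈ X <;> simp [cl, h]

theorem cl_mono (h : X ⊆ Y) : cl G X ⊆ cl G Y := by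
  intro v
  simp only [mem_cl]
  exact Or.imp (@h v) fun ⟨u, hu, huv⟩ => ⟨u, h hu, huv⟩

theorem cl_union : cl G (X ∪ Y) = cl G X ∪ cl G Y := by
  ext v
  simp only [mem_union, mem_cl, or_and_right, exists_or]
  exact or_or_or_comm

theorem nbr_union_union_nbr_inter_subset :
    nbr G (X ∪ Y) ∪ nbr G (X ∩ Y) ⊆ nbr G X ∪ nbr G Y := by
  intro v
  simp only [mem_union, mem_inter, mem_nbr, not_or, not_and_or]
  rintro (⟨⟨hX, hY⟩, u, hu | hu, huv⟩ | ⟨hX | hY, u, ⟨huX, huY⟩, huv⟩)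
  · exact .inl ⟨hX, u, hu, huv⟩
  · exact .inr ⟨hY, u, hu, huv⟩
  · exact .inl ⟨hX, u, huX, huv⟩
  · exact .inr ⟨hY, u, huY, huv⟩

theorem nbr_union_inter_nbr_inter_subset :
    nbr G (X ∪ Y) ∩ nbr G (X ∩ Y) ⊆ nbr G X ∩ nbr G Y := by
  intro v
  simp only [mem_union, mem_inter, mem_nbr, not_or]
  rintro ⟨⟨⟨hX, hY⟩, -⟩, -, u, ⟨huX, huY⟩, huv⟩
  exact ⟨⟨hX, u, huX, huv⟩, hY, u, huY, huv⟩

theorem card_nbr_union_add_card_nbr_inter_le (T : Finset V) :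
    #(nbr G (X ∪ Y) ∩ T) + #(nbr G (X ∩ Y) ∩ T) ≤ #(nbr G X ∩ T) + #(nbr G Y ∩ T) := by
  rw [← card_union_add_card_inter (nbr G X ∩ T), ← union_inter_distrib_right,
    ← inter_inter_distrib_right, ← card_union_add_card_inter, ← union_inter_distrib_right,
    ← inter_inter_distrib_right]
  exact add_le_add (card_le_card (inter_subset_inter_right nbr_union_union_nbr_inter_subset))
    (card_le_card (inter_subset_inter_right nbr_union_inter_nbr_inter_subset))

def SteinerCutsAtLeast (G : SimpleGraph V) [DecidableRel G.Adj] (T : Finset V) (m : ℕ) : Prop :=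
  ∀ Z : Finset V, (Z ∩ T).Nonempty → (T \ cl G Z).Nonempty → m ≤ #(nbr G Z ∩ T)

variable {T : Finset V} {k : ℕ} {r : V}

theorem IsDemand.inter_and_union (hT : SteinerCutsAtLeast G T (k - 1)) (hr : r ∈ T)
    (hX : IsDemand G T k r X) (hY : IsDemand G T k r Y) (hXY : (X ∩ Y ∩ T).Nonempty) :
    IsDemand G T k r (X ∩ Y) ∧ IsDemand G T k r (X ∪ Y) := by
  obtain ⟨hXT, ⟨t, ht⟩, hXr, hXcard⟩ := hX
  obtain ⟨-, -, hYr, hYcard⟩ := hY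
  have hrU : r ∉ cl G (X ∪ Y) := by simp [cl_union, hXr, hYr]
  have hTI : (T \ cl G (X ∩ Y)).Nonempty :=
    ⟨t, sdiff_subset_sdiff Subset.rfl (cl_mono inter_subset_left) ht⟩
  have hTU : (T \ cl G (X ∪ Y)).Nonempty := ⟨r, mem_sdiff.2 ⟨hr, hrU⟩⟩
  have hUT : ((X ∪ Y) ∩ T).Nonempty := hXT.mono (inter_subset_inter_right subset_union_left)
  have hI_ge := hT _ hXY hTI
  have hU_ge := hT _ hUT hTU
  have hsubmod := card_nbr_union_add_card_nbr_inter_le (G := G) (X := X) (Y := Y) T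
  exact ⟨⟨hXY, hTI, fun h => hXr (cl_mono inter_subset_left h), by omega⟩,
    ⟨hUT, hTU, hrU, by omega⟩⟩

theorem IsMinCore.subset_of_inter_nonempty (hT : SteinerCutsAtLeast G T (k - 1)) (hr : r ∈ T)
    (hZ : IsMinCore G T k r Z) (hX : IsDemand G T k r X) (hZX : (Z ∩ X ∩ T).Nonempty) :
    Z ⊆ X :=
  inter_eq_left.1 <| hZ.2 _ (hZ.1.inter_and_union hT hr hX hZX).1 inter_subset_left

theorem IsMinCore.disjoint_inter (hT : SteinerCutsAtLeast G T (k - 1)) (hr : r ∈ T)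
    (hZ : IsMinCore G T k r Z) (hW : IsMinCore G T k r W) (hne : Z ≠ W) :
    Disjoint (Z ∩ T) (W ∩ T) := by
  contrapose! hne
  rw [not_disjoint_iff_nonempty_inter, ← inter_inter_distrib_right] at hne
  exact hW.2 Z hZ.1 (hZ.subset_of_inter_nonempty hT hr hW.1 hne)

theorem IsMinCore.mem_coreFam (hZ : IsMinCore G T k r Z) : Z ∈ coreFam G T k r Z :=
  ⟨⟨hZ.1, Z, ⟨hZ, Subset.rfl⟩, fun _ hW => hZ.2 _ hW.1.1 hW.2⟩, Subset.rfl⟩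

theorem eq_of_mem_coreFam (hT : SteinerCutsAtLeast G T (k - 1)) (hr : r ∈ T)
    (hZ : IsMinCore G T k r Z) (hX : X ∈ coreFam G T k r Z) (hW : IsMinCore G T k r W)
    (hWX : (W ∩ X ∩ T).Nonempty) : W = Z :=
  hX.1.2.unique ⟨hW, hW.subset_of_inter_nonempty hT hr hX.1.1 hWX⟩ ⟨hZ, hX.2⟩

theorem union_mem_coreFam (hT : SteinerCutsAtLeast G T (k - 1)) (hr : r ∈ T)
    (hZ : IsMinCore G T k r Z) (hX : X ∈ coreFam G T k r Z) (hY : Y ∈ coreFam G T k r Z) :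
    X ∪ Y ∈ coreFam G T k r Z := by
  have hZU : Z ⊆ X ∪ Y := hX.2.trans subset_union_left
  have hXY : (X ∩ Y ∩ T).Nonempty :=
    hZ.1.1.mono (inter_subset_inter_right (subset_inter hX.2 hY.2))
  refine ⟨⟨(hX.1.1.inter_and_union hT hr hY.1.1 hXY).2, Z, ⟨hZ, hZU⟩, ?_⟩, hZU⟩
  rintro W ⟨hW, hWU⟩
  obtain ⟨t, ht⟩ := hW.1.1
  rw [mem_inter] at ht
  rcases mem_union.1 (hWU ht.1) with htX | htY
  · exact eq_of_mem_coreFam hT hr hZ hX hW ⟨t, by simp [ht, htX]⟩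
  · exact eq_of_mem_coreFam hT hr hZ hY hW ⟨t, by simp [ht, htY]⟩

theorem IsMinCore.existsUnique_isMaxCore (hT : SteinerCutsAtLeast G T (k - 1)) (hr : r ∈ T)
    (hZ : IsMinCore G T k r Z) : ∃! X, IsMaxCore G T k r Z X := by
  obtain ⟨X, hX, hXmax⟩ := (coreFam G T k r Z).toFinite.exists_maximal ⟨Z, hZ.mem_coreFam⟩
  refine ⟨X, ⟨hX, fun Y hY hXY => (hXmax hY hXY).antisymm hXY⟩, fun Y hY => ?_⟩
  have hU := union_mem_coreFam hT hr hZ hX hY.1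
  exact (hY.2 X hX (subset_union_right.trans (hXmax hU subset_union_left))).symm

variable (G T k r) in
def CoversTerminals (Z W : Finset V) : Prop :=
  ∃ Z', IsMaxCore G T k r Z Z' ∧ W ∩ T ⊆ nbr G Z'

theorem indepCores_of_not_coversTerminals (hZW : ¬ CoversTerminals G T k r Z W)
    (hWZ : ¬ CoversTerminals G T k r W Z) : IndepCores G T k r Z W :=
  fun Z' W' hZ' hW' => ⟨fun h => hZW ⟨Z', hZ', h⟩, fun h => hWZ ⟨W', hW', h⟩⟩

theorem IsMinCore.card_filter_coversTerminals_le [DecidablePred (CoversTerminals G T k r Z)]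
    (hT : SteinerCutsAtLeast G T (k - 1)) (hr : r ∈ T) {γ : ℕ} (hγ : 0 < γ)
    (hγle : ∀ X, IsMinCore G T k r X → γ ≤ #(X ∩ T)) (hZ : IsMinCore G T k r Z)
    {M : Finset (Finset V)} (hM : ∀ W ∈ M, IsMinCore G T k r W) :
    #(M.filter (CoversTerminals G T k r Z)) ≤ (k - 1) / γ := by
  obtain ⟨Z', hZ', hZ'_unique⟩ := hZ.existsUnique_isMaxCore hT hr
  obtain ⟨⟨⟨⟨-, -, -, hcard⟩, -⟩, -⟩, -⟩ := hZ'
  rw [Nat.le_div_iff_mul_le hγ, ← hcard]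
  refine card_mul_le_card_of_pairwiseDisjoint (f := (· ∩ T)) ?_ ?_ ?_
  · intro W hW W' hW' hne
    exact (hM W (mem_filter.1 hW).1).disjoint_inter hT hr (hM W' (mem_filter.1 hW').1) hne
  · intro W hW
    obtain ⟨-, Z'', hZ'', hsub⟩ := mem_filter.1 hW
    rw [hZ'_unique Z'' hZ''] at hsub
    exact subset_inter hsub inter_subset_right
  · exact fun W hW => hγle W (hM W (mem_filter.1 hW).1)

end Cuts

theorem stmt_14_general {V : Type*} [Fintype V] [DecidableEq V]
    (G : SimpleGraph V) [DecidableRel G.Adj] (k : ℕ)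
    (T : Finset V)
    -- |Γ_T(Z)| ≥ k-1 for every Steiner T-cut Z
    (hTconn : ∀ Z : Finset V, (Z ∩ T).Nonempty → (T \ cl G Z).Nonempty →
      k - 1 ≤ (nbr G Z ∩ T).card)
    (r : V) (hr : r ∈ T)
    -- γ = min over min-cores X of |X ∩ T|, and γ ≥ 1
    (γ : ℕ) (hγpos : 1 ≤ γ)
    (hγle : ∀ X : Finset V, IsMinCore G T k r X → γ ≤ (X ∩ T).card) :
    -- decomposition of M into 2⌊(k-1)/γ⌋+1 pairwise independent subfamilies
    ∃ Ms : Fin (2 * ((k - 1) / γ) + 1) → Set (Finset V),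
      (∀ i, Ms i ⊆ {X : Finset V | IsMinCore G T k r X}) ∧
      (⋃ i, Ms i) = {X : Finset V | IsMinCore G T k r X} ∧
      ∀ i, ∀ Z ∈ Ms i, ∀ W ∈ Ms i, Z ≠ W → IndepCores G T k r Z W := by
  classical
  have hM : ∀ W ∈ univ.filter (IsMinCore G T k r), IsMinCore G T k r W :=
    fun W hW => (mem_filter.1 hW).2
  obtain ⟨c, hc⟩ := exists_coloring_of_card_filter_le (CoversTerminals G T k r) ((k - 1) / γ) _
    fun Z hZ => (hM Z hZ).card_filter_coversTerminals_le hTconn hr hγpos hγle hM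
  refine ⟨fun i => {X | IsMinCore G T k r X ∧ c X = i}, fun i X hX => hX.1, ?_, ?_⟩
  · ext X
    simp
  · rintro i Z ⟨hZ, rfl⟩ W ⟨hW, hcW⟩ hne
    have hcovers := hc Z (by simpa using hZ) W (by simpa using hW) hne
    exact indepCores_of_not_coversTerminals (fun h => hcovers (.inl h) hcW.symm)
      (fun h => hcovers (.inr h) hcW.symm)

theorem stmt_14 {V : Type*} [Fintype V] [DecidableEq V]
    (G : SimpleGraph V) [DecidableRel G.Adj] (k : ℕ) (hk : 1 ≤ k)
    (T : Finset V)
    -- |Γ_T(Z)| ≥ k-1 for every Steiner T-cut Z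
    (hTconn : ∀ Z : Finset V, (Z ∩ T).Nonempty → (T \ cl G Z).Nonempty →
      k - 1 ≤ (nbr G Z ∩ T).card)
    (r : V) (hr : r ∈ T)
    -- M is the (nonempty) family of min-cores
    (hMne : {X : Finset V | IsMinCore G T k r X}.Nonempty)
    -- γ = min over min-cores X of |X ∩ T|, and γ ≥ 1
    (γ : ℕ) (hγpos : 1 ≤ γ)
    (hγle : ∀ X : Finset V, IsMinCore G T k r X → γ ≤ (X ∩ T).card)
    (hγmem : ∃ X : Finset V, IsMinCore G T k r X ∧ (X ∩ T).card = γ) :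
    -- decomposition of M into 2⌊(k-1)/γ⌋+1 pairwise independent subfamilies
    ∃ Ms : Fin (2 * ((k - 1) / γ) + 1) → Set (Finset V),
      (∀ i, Ms i ⊆ {X : Finset V | IsMinCore G T k r X}) ∧
      (⋃ i, Ms i) = {X : Finset V | IsMinCore G T k r X} ∧
      ∀ i, ∀ Z ∈ Ms i, ∀ W ∈ Ms i, Z ≠ W → IndepCores G T k r Z W :=
  stmt_14_general G k T hTconn r hr γ hγpos hγle
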